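/- Let T be an R-tree with an isometric action of F_N with dense orbits and trivial arc stabilizers, let μ be an invariant nonatomic length measure on T that is absolutely continuous with respect to Lebesgue measure, and let f_μ : T → T_μ be the quotient map collapsing the pseudo-metric d_μ(x,y) = μ([x,y]). Then for every point x ∈ T_μ, the fiber f_μ^{-1}(x) is a closed subtree of T, and Stab(f_μ^{-1}(x)) = Stab(x). Moreover, if some fiber f_μ^{-1}(x) is nondegenerate, then the collection of translates {g·f_μ^{-1}(x) : g ∈ F_N} is a transverse family in T. -/

import Mathlib

open Pointwise

/-- The segment `[x,y]` in a metric space (in an `ℝ`-tree this is the arc from `x` to `y`). -/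
def seg {T : Type*} [MetricSpace T] (x y : T) : Set T :=
  {z : T | dist x z + dist z y = dist x y}

/-- An `ℝ`-tree: a geodesic metric space that is `0`-hyperbolic (four-point condition),
equivalently any two points are joined by a unique arc, isometric to a real interval. -/
def IsRTree (T : Type*) [MetricSpace T] : Prop :=
  (∀ x y : T, ∃ f : ℝ → T, f 0 = x ∧ f (dist x y) = y ∧
      ∀ s ∈ Set.Icc (0 : ℝ) (dist x y), ∀ t ∈ Set.Icc (0 : ℝ) (dist x y),
        dist (f s) (f t) = |s - t|) ∧
  ∀ x y z w : T, dist x y + dist z w ≤ max (dist x z + dist y w) (dist x w + dist y z)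

/-- A subtree: a convex subset. -/
def IsSubtree {T : Type*} [MetricSpace T] (Y : Set T) : Prop :=
  ∀ x ∈ Y, ∀ y ∈ Y, seg x y ⊆ Y

/-- An arc: a subset isometric to a nondegenerate closed real interval. -/
def IsArc {T : Type*} [MetricSpace T] (A : Set T) : Prop :=
  ∃ (a b : ℝ) (f : ℝ → T), a < b ∧
    (∀ s ∈ Set.Icc a b, ∀ t ∈ Set.Icc a b, dist (f s) (f t) = |s - t|) ∧
    A = f '' Set.Icc a b

/-- A transverse family: a `G`-invariant collection of nondegenerate subtrees, any two
distinct members of which intersect in at most one point. -/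
structure IsTransverseFamily (G : Type*) {T : Type*} [Group G] [MulAction G T]
    [MetricSpace T] (F : Set (Set T)) : Prop where
  invariant : ∀ (g : G), ∀ Y ∈ F, g • Y ∈ F
  subtree : ∀ Y ∈ F, IsSubtree Y
  nondeg : ∀ Y ∈ F, ¬Y.Subsingleton
  transverse : ∀ Y ∈ F, ∀ Y' ∈ F, Y ≠ Y' → (Y ∩ Y').Subsingleton

open MeasureTheory Filter Topology

/-!
Since `seg a c ⊆ seg a b ∪ seg b c` in a `0`-hyperbolic space, `μ (seg a b) = 0` is an
equivalence relation (reflexive because `μ` has no atoms), and the fibers of `f_μ` are its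
classes; hence two fibers are equal or disjoint, which gives transversality.  A fiber is convex
because a subsegment of a null segment is null, and closed because the segment to a limit `y` of
`u n` is covered by `{y}` and the segments to the `u n`.  An isometric, `μ`-preserving action maps
the fiber of `z` onto the fiber of `g • z`.
-/

section Segments

variable {T : Type*} [MetricSpace T]

def IsZeroHyperbolic (T : Type*) [MetricSpace T] : Prop :=
  ∀ x y z w : T, dist x y + dist z w ≤ max (dist x z + dist y w) (dist x w + dist y z)

theorem IsRTree.isZeroHyperbolic (hT : IsRTree T) : IsZeroHyperbolic T := hT.2

theorem seg_comm (x y : T) : seg x y = seg y x := by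
  ext w
  simp only [seg, Set.mem_ofPred_eq, dist_comm x w, dist_comm w y, dist_comm x y, add_comm]

theorem seg_self (x : T) : seg x x = {x} := by
  ext w
  simp only [seg, Set.mem_ofPred_eq, dist_self, Set.mem_singleton_iff]
  constructor
  · intro h
    have : dist x w = 0 := by linarith [dist_nonneg (x := x) (y := w), dist_nonneg (x := w) (y := x)]
    exact (dist_eq_zero.mp this).symm
  · rintro rfl
    simp

theorem seg_subset_seg_of_mem {x y w : T} (hw : w ∈ seg x y) : seg x w ⊆ seg x y := by
  intro u (hu : dist x u + dist u w = dist x w)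
  have hw : dist x w + dist w y = dist x y := hw
  exact le_antisymm (by linarith [dist_triangle u w y]) (dist_triangle x u y)

theorem IsZeroHyperbolic.seg_subset_union (hT : IsZeroHyperbolic T) (a b c : T) :
    seg a c ⊆ seg a b ∪ seg b c := by
  intro w (hw : dist a w + dist w c = dist a c)
  have := dist_comm b w
  rcases le_max_iff.mp (hT a c b w) with h | h
  · exact Or.inl <| le_antisymm (by linarith [dist_comm c w]) (dist_triangle a w b)
  · exact Or.inr <| le_antisymm (by linarith [dist_comm c b]) (dist_triangle b w c)

theorem IsZeroHyperbolic.mem_seg_of_dist_le (hT : IsZeroHyperbolic T) {z y y' w : T}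
    (hw : w ∈ seg z y) (hle : dist y y' ≤ dist w y) : w ∈ seg z y' := by
  have hw : dist z w + dist w y = dist z y := hw
  rcases le_max_iff.mp (hT w y' y z) with h | h <;>
  · refine le_antisymm ?_ (dist_triangle z w y')
    linarith [dist_triangle z y' y, dist_comm y' y, dist_comm w z, dist_comm y z, dist_comm y' z]

theorem IsZeroHyperbolic.seg_subset_insert_iUnion_seg (hT : IsZeroHyperbolic T) {u : ℕ → T}
    {y : T} (hu : Tendsto u atTop (𝓝 y)) (z : T) :
    seg z y ⊆ insert y (⋃ n, seg z (u n)) := by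
  intro w hw
  rcases eq_or_ne w y with rfl | hwy
  · exact Set.mem_insert _ _
  obtain ⟨n, hn⟩ := Metric.tendsto_atTop.mp hu (dist w y) (dist_pos.mpr hwy)
  refine Or.inr (Set.mem_iUnion.mpr ⟨n, hT.mem_seg_of_dist_le hw ?_⟩)
  exact (dist_comm y (u n)).trans_le (hn n le_rfl).le

theorem smul_seg {G : Type*} [Group G] [MulAction G T] [IsIsometricSMul G T] (g : G) (a b : T) :
    g • seg a b = seg (g • a) (g • b) := by
  ext w
  rw [Set.mem_smul_set_iff_inv_smul_mem]
  conv_rhs => rw [← smul_inv_smul g w]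
  simp only [seg, Set.mem_ofPred_eq, dist_smul]

end Segments

section Fibers

variable {T : Type*} [MetricSpace T] [MeasurableSpace T] (μ : Measure T)

/-- The fiber `f_μ⁻¹ (f_μ z)` of the projection `T → T_μ`. -/
def fiber (z : T) : Set T := {y | μ (seg z y) = 0}

variable {μ}

theorem mem_fiber_self [NullSingletonClass μ] (z : T) : z ∈ fiber μ z := by
  simp [fiber, seg_self]

variable {G : Type*} [Group G] [MulAction G T] [IsIsometricSMul G T] [SMulInvariantMeasure G T μ]

theorem smul_fiber (g : G) (z : T) : g • fiber μ z = fiber μ (g • z) := by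
  ext y
  rw [Set.mem_smul_set_iff_inv_smul_mem]
  conv_rhs => rw [← smul_inv_smul g y]
  simp only [fiber, Set.mem_ofPred_eq, ← smul_seg, measure_smul]

namespace IsZeroHyperbolic

variable (hT : IsZeroHyperbolic T)
include hT

theorem measure_seg_eq_zero_trans {a b c : T} (hab : μ (seg a b) = 0) (hbc : μ (seg b c) = 0) :
    μ (seg a c) = 0 :=
  measure_mono_null (hT.seg_subset_union a b c) (measure_union_null hab hbc)

theorem fiber_eq_of_mem {z a : T} (ha : a ∈ fiber μ z) : fiber μ a = fiber μ z := by
  have ha' : μ (seg a z) = 0 := by rwa [seg_comm]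
  ext y
  exact ⟨hT.measure_seg_eq_zero_trans ha, hT.measure_seg_eq_zero_trans ha'⟩

theorem fiber_eq_or_disjoint (z z' : T) :
    fiber μ z = fiber μ z' ∨ Disjoint (fiber μ z) (fiber μ z') := by
  refine or_iff_not_imp_right.mpr fun h => ?_
  obtain ⟨a, ha, ha'⟩ := Set.not_disjoint_iff.mp h
  rw [← hT.fiber_eq_of_mem ha, hT.fiber_eq_of_mem ha']

theorem isSubtree_fiber (z : T) : IsSubtree (fiber μ z) := by
  intro a (ha : μ (seg z a) = 0) b (hb : μ (seg z b) = 0) w hw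
  have hab : μ (seg a b) = 0 := hT.measure_seg_eq_zero_trans (by rwa [seg_comm]) hb
  exact hT.measure_seg_eq_zero_trans ha (measure_mono_null (seg_subset_seg_of_mem hw) hab)

theorem isClosed_fiber [NullSingletonClass μ] (z : T) : IsClosed (fiber μ z) := by
  refine IsSeqClosed.isClosed fun u y hu hlim => ?_
  refine measure_mono_null (hT.seg_subset_insert_iUnion_seg hlim z) ?_
  rw [Set.insert_eq]
  exact measure_union_null (measure_singleton y) (measure_iUnion_null hu)

theorem smul_fiber_eq_self_iff [NullSingletonClass μ] (g : G) (z : T) :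
    g • fiber μ z = fiber μ z ↔ μ (seg z (g • z)) = 0 := by
  rw [smul_fiber]
  exact ⟨fun h => (h ▸ mem_fiber_self (g • z) : g • z ∈ fiber μ z), hT.fiber_eq_of_mem⟩

theorem isTransverseFamily_translates_fiber [NullSingletonClass μ] {z : T}
    (hz : ¬(fiber μ z).Subsingleton) :
    IsTransverseFamily G {A : Set T | ∃ g : G, A = g • fiber μ z} where
  invariant := by
    rintro g _ ⟨g', rfl⟩
    exact ⟨g * g', smul_smul g g' _⟩
  subtree := by
    rintro _ ⟨g, rfl⟩
    rw [smul_fiber]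
    exact hT.isSubtree_fiber _
  nondeg := by
    rintro _ ⟨g, rfl⟩ h
    exact hz ((h.preimage (MulAction.injective g)).anti fun y hy => Set.smul_mem_smul_set hy)
  transverse := by
    rintro _ ⟨g, rfl⟩ _ ⟨g', rfl⟩ hne
    rw [smul_fiber, smul_fiber] at hne ⊢
    rw [((hT.fiber_eq_or_disjoint _ _).resolve_left hne).inter_eq]
    exact Set.subsingleton_empty

end IsZeroHyperbolic

end Fibers

theorem fibers_of_measure_projection_general
    {T : Type*} [MetricSpace T] [MeasurableSpace T]
    {N : ℕ} [MulAction (FreeGroup (Fin N)) T]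
    (hT : IsRTree T) (hiso : ∀ g : FreeGroup (Fin N), Isometry fun x : T => g • x)
    (μ : Measure T) [SMulInvariantMeasure (FreeGroup (Fin N)) T μ]
    (hatom : ∀ x : T, μ {x} = 0) :
    (∀ z : T, IsClosed {y : T | μ (seg z y) = 0} ∧ IsSubtree {y : T | μ (seg z y) = 0}) ∧
      (∀ (z : T) (g : FreeGroup (Fin N)),
        g • {y : T | μ (seg z y) = 0} = {y : T | μ (seg z y) = 0} ↔ μ (seg z (g • z)) = 0) ∧
      (∀ z : T, ¬({y : T | μ (seg z y) = 0} : Set T).Subsingleton →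
        IsTransverseFamily (FreeGroup (Fin N))
          {A : Set T | ∃ g : FreeGroup (Fin N), A = g • {y : T | μ (seg z y) = 0}}) := by
  have : IsIsometricSMul (FreeGroup (Fin N)) T := ⟨hiso⟩
  have : NullSingletonClass μ := ⟨hatom⟩
  have hT0 := hT.isZeroHyperbolic
  exact ⟨fun z => ⟨hT0.isClosed_fiber z, hT0.isSubtree_fiber z⟩,
    fun z g => hT0.smul_fiber_eq_self_iff g z,
    fun z hz => hT0.isTransverseFamily_translates_fiber hz⟩

/-- Let `T` be an `ℝ`-tree with an isometric `F_N`-action with dense orbits and trivial arc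
stabilizers, and let `μ` be an invariant nonatomic length measure on `T` (finite on segments)
absolutely continuous with respect to the `1`-dimensional Hausdorff (Lebesgue) measure.  Then
every fiber `{y | μ [z,y] = 0}` of the projection `f_μ : T → T_μ` is a closed subtree, its
setwise stabilizer coincides with the stabilizer of the corresponding point of `T_μ`, and if
some fiber is nondegenerate then its translates form a transverse family. -/
theorem fibers_of_measure_projection
    {T : Type*} [MetricSpace T] [MeasurableSpace T] [BorelSpace T]
    {N : ℕ} [MulAction (FreeGroup (Fin N)) T]
    (hT : IsRTree T) (hiso : ∀ g : FreeGroup (Fin N), Isometry fun x : T => g • x)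
    (hdense : ∀ x : T, Dense (MulAction.orbit (FreeGroup (Fin N)) x : Set T))
    (harc : ∀ (g : FreeGroup (Fin N)) (x y : T), x ≠ y →
      (∀ z ∈ seg x y, g • z = z) → g = 1)
    (μ : Measure T) [SMulInvariantMeasure (FreeGroup (Fin N)) T μ]
    (hfin : ∀ x y : T, μ (seg x y) < ⊤)
    (hatom : ∀ x : T, μ {x} = 0)
    (hac : μ ≪ Measure.hausdorffMeasure 1) :
    (∀ z : T, IsClosed {y : T | μ (seg z y) = 0} ∧ IsSubtree {y : T | μ (seg z y) = 0}) ∧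
      (∀ (z : T) (g : FreeGroup (Fin N)),
        g • {y : T | μ (seg z y) = 0} = {y : T | μ (seg z y) = 0} ↔ μ (seg z (g • z)) = 0) ∧
      (∀ z : T, ¬({y : T | μ (seg z y) = 0} : Set T).Subsingleton →
        IsTransverseFamily (FreeGroup (Fin N))
          {A : Set T | ∃ g : FreeGroup (Fin N), A = g • {y : T | μ (seg z y) = 0}}) :=
  fibers_of_measure_projection_general hT hiso μ hatom
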